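/- If a, b ∈ (0,1) and a + b > 1, then 5(Δ₆₁−Δ₁₆) + 4(Δ₆₂−Δ₂₆) + 3(Δ₆₃−Δ₃₆) + 2(Δ₆₄−Δ₄₆) > 0; equivalently, the expected games-won margin of player A in a set is strictly larger when A serves first than when B serves first. -/
import Mathlib


noncomputable section

/-- Probability that the set ends 6-0 for the player serving first. -/
def S60 (x1 y2 : ℝ) : ℝ := (x1*y2)^3
def S61 (x1 x2 y1 y2 : ℝ) : ℝ := 3*x1^3*x2*y2^3 + 3*x1^4*y1*y2^2
def S62 (x1 x2 y1 y2 : ℝ) : ℝ :=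
  12*x1^3*x2*y1*y2^3 + 6*x1^2*x2^2*y2^4 + 3*x1^4*y1^2*y2^2
def S63 (x1 x2 y1 y2 : ℝ) : ℝ :=
  24*x1^3*x2^2*y1*y2^3 + 24*x1^4*x2*y1^2*y2^2 + 4*x1^2*x2^3*y2^4 + 4*x1^5*y1^3*y2
def S64 (x1 x2 y1 y2 : ℝ) : ℝ :=
  60*x1^3*x2^2*y1^2*y2^3 + 40*x1^2*x2^3*y1*y2^4 + 20*x1^4*x2*y1^3*y2^2
    + 5*x1*x2^4*y2^5 + x1^5*y1^4*y2
def S75 (x1 x2 y1 y2 : ℝ) : ℝ :=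
  100*x1^3*x2^3*y1^2*y2^4 + 100*x1^4*x2^2*y1^3*y2^3 + 25*x1^2*x2^4*y1*y2^5
    + 25*x1^5*x2*y1^4*y2^2 + x1*x2^5*y2^6 + x1^6*y1^5*y2

/- Set-score probabilities when A serves first, as functions of the
   game-winning-on-serve probabilities a (for A) and b (for B). -/
def SA60 (a b : ℝ) : ℝ := S60 a (1-b)
def SA06 (a b : ℝ) : ℝ := ((1-a)*b)^3
def SA61 (a b : ℝ) : ℝ := S61 a (1-a) b (1-b)
def SA16 (a b : ℝ) : ℝ := S61 (1-a) a (1-b) b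
def SA62 (a b : ℝ) : ℝ := S62 a (1-a) b (1-b)
def SA26 (a b : ℝ) : ℝ := S62 (1-a) a (1-b) b
def SA63 (a b : ℝ) : ℝ := S63 a (1-a) b (1-b)
def SA36 (a b : ℝ) : ℝ := S63 (1-a) a (1-b) b
def SA64 (a b : ℝ) : ℝ := S64 a (1-a) b (1-b)
def SA46 (a b : ℝ) : ℝ := S64 (1-a) a (1-b) b
def SA75 (a b : ℝ) : ℝ := S75 a (1-a) b (1-b)
def SA57 (a b : ℝ) : ℝ := S75 (1-a) a (1-b) b
def SA66 (a b : ℝ) : ℝ :=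
  1 - (SA60 a b + SA06 a b + SA61 a b + SA16 a b + SA62 a b + SA26 a b
        + SA63 a b + SA36 a b + SA64 a b + SA46 a b)
    - SA75 a b - SA57 a b

/- Probabilities that a set with first server A (resp. B) ends after exactly
   k games.  When B serves first the roles of a and b are interchanged. -/
def pi6A (a b : ℝ) : ℝ := SA60 a b + SA06 a b
def pi7A (a b : ℝ) : ℝ := SA61 a b + SA16 a b
def pi8A (a b : ℝ) : ℝ := SA62 a b + SA26 a b
def pi9A (a b : ℝ) : ℝ := SA63 a b + SA36 a b
def pi10A (a b : ℝ) : ℝ := SA64 a b + SA46 a b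
def pi12A (a b : ℝ) : ℝ := SA75 a b + SA57 a b
def pi13A (a b : ℝ) : ℝ := SA66 a b

def pi6B (a b : ℝ) : ℝ := pi6A b a
def pi7B (a b : ℝ) : ℝ := pi7A b a
def pi8B (a b : ℝ) : ℝ := pi8A b a
def pi9B (a b : ℝ) : ℝ := pi9A b a
def pi10B (a b : ℝ) : ℝ := pi10A b a
def pi12B (a b : ℝ) : ℝ := pi12A b a
def pi13B (a b : ℝ) : ℝ := pi13A b a

/- Δ_{nm} = S^A_{nm} − S^B_{mn}, where S^B_{nm}(a,b) = S^A_{nm}(b,a). -/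
def D61 (a b : ℝ) : ℝ := SA61 a b - SA16 b a
def D16 (a b : ℝ) : ℝ := SA16 a b - SA61 b a
def D62 (a b : ℝ) : ℝ := SA62 a b - SA26 b a
def D26 (a b : ℝ) : ℝ := SA26 a b - SA62 b a
def D63 (a b : ℝ) : ℝ := SA63 a b - SA36 b a
def D36 (a b : ℝ) : ℝ := SA36 a b - SA63 b a
def D64 (a b : ℝ) : ℝ := SA64 a b - SA46 b a
def D46 (a b : ℝ) : ℝ := SA46 a b - SA64 b a

lemma margin_aux (u v w : ℝ) (hu : 0 < u) (hv : 0 < v) (hw : 0 < w) :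
    0 < 4*v*w^8 + 19*v^2*w^7 + 39*v^3*w^6 + 46*v^4*w^5 + 34*v^5*w^4 + 15*v^6*w^3 + 3*v^7*w^2 + 4*u*w^8 + 24*u*v*w^7 + 93*u*v^2*w^6 + 190*u*v^3*w^5 + 198*u*v^4*w^4 + 108*u*v^5*w^3 + 33*u*v^6*w^2 + 6*u*v^7*w + 19*u^2*w^7 + 93*u^2*v*w^6 + 210*u^2*v^2*w^5 + 322*u^2*v^3*w^4 + 303*u^2*v^4*w^3 + 129*u^2*v^5*w^2 + 12*u^2*v^6*w + 39*u^3*w^6 + 190*u^3*v*w^5 + 322*u^3*v^2*w^4 + 264*u^3*v^3*w^3 + 155*u^3*v^4*w^2 + 62*u^3*v^5*w + 46*u^4*w^5 + 198*u^4*v*w^4 + 303*u^4*v^2*w^3 + 155*u^4*v^3*w^2 + 34*u^5*w^4 + 108*u^5*v*w^3 + 129*u^5*v^2*w^2 + 62*u^5*v^3*w + 15*u^6*w^3 + 33*u^6*v*w^2 + 12*u^6*v^2*w + 3*u^7*w^2 + 6*u^7*v*w := by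
  linarith [mul_pos (mul_pos (pow_pos hu 0) (pow_pos hv 1)) (pow_pos hw 8), mul_pos (mul_pos (pow_pos hu 0) (pow_pos hv 2)) (pow_pos hw 7), mul_pos (mul_pos (pow_pos hu 0) (pow_pos hv 3)) (pow_pos hw 6), mul_pos (mul_pos (pow_pos hu 0) (pow_pos hv 4)) (pow_pos hw 5), mul_pos (mul_pos (pow_pos hu 0) (pow_pos hv 5)) (pow_pos hw 4), mul_pos (mul_pos (pow_pos hu 0) (pow_pos hv 6)) (pow_pos hw 3), mul_pos (mul_pos (pow_pos hu 0) (pow_pos hv 7)) (pow_pos hw 2), mul_pos (mul_pos (pow_pos hu 1) (pow_pos hv 0)) (pow_pos hw 8), mul_pos (mul_pos (pow_pos hu 1) (pow_pos hv 1)) (pow_pos hw 7), mul_pos (mul_pos (pow_pos hu 1) (pow_pos hv 2)) (pow_pos hw 6), mul_pos (mul_pos (pow_pos hu 1) (pow_pos hv 3)) (pow_pos hw 5), mul_pos (mul_pos (pow_pos hu 1) (pow_pos hv 4)) (pow_pos hw 4), mul_pos (mul_pos (pow_pos hu 1) (pow_pos hv 5)) (pow_pos hw 3), mul_pos (mul_pos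 (pow_pos hu 1) (pow_pos hv 6)) (pow_pos hw 2), mul_pos (mul_pos (pow_pos hu 1) (pow_pos hv 7)) (pow_pos hw 1), mul_pos (mul_pos (pow_pos hu 2) (pow_pos hv 0)) (pow_pos hw 7), mul_pos (mul_pos (pow_pos hu 2) (pow_pos hv 1)) (pow_pos hw 6), mul_pos (mul_pos (pow_pos hu 2) (pow_pos hv 2)) (pow_pos hw 5), mul_pos (mul_pos (pow_pos hu 2) (pow_pos hv 3)) (pow_pos hw 4), mul_pos (mul_pos (pow_pos hu 2) (pow_pos hv 4)) (pow_pos hw 3), mul_pos (mul_pos (pow_pos hu 2) (pow_pos hv 5)) (pow_pos hw 2), mul_pos (mul_pos (pow_pos hu 2) (pow_pos hv 6)) (pow_pos hw 1), mul_pos (mul_pos (pow_pos hu 3) (pow_pos hv 0)) (pow_pos hw 6), mul_pos (mul_pos (pow_pos hu 3) (pow_pos hv 1)) (pow_pos hw 5), mul_pos (mul_pos (pow_pos hu 3) (pow_pos hv 2)) (pow_pos hw 4), mul_pos (mul_pos (pow_pos hu 3) (pow_pos hv 3)) (pow_pos hw 3), mul_pos (mul_pos (pow_pos hu 3) (pow_pos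 hv 4)) (pow_pos hw 2), mul_pos (mul_pos (pow_pos hu 3) (pow_pos hv 5)) (pow_pos hw 1), mul_pos (mul_pos (pow_pos hu 4) (pow_pos hv 0)) (pow_pos hw 5), mul_pos (mul_pos (pow_pos hu 4) (pow_pos hv 1)) (pow_pos hw 4), mul_pos (mul_pos (pow_pos hu 4) (pow_pos hv 2)) (pow_pos hw 3), mul_pos (mul_pos (pow_pos hu 4) (pow_pos hv 3)) (pow_pos hw 2), mul_pos (mul_pos (pow_pos hu 5) (pow_pos hv 0)) (pow_pos hw 4), mul_pos (mul_pos (pow_pos hu 5) (pow_pos hv 1)) (pow_pos hw 3), mul_pos (mul_pos (pow_pos hu 5) (pow_pos hv 2)) (pow_pos hw 2), mul_pos (mul_pos (pow_pos hu 5) (pow_pos hv 3)) (pow_pos hw 1), mul_pos (mul_pos (pow_pos hu 6) (pow_pos hv 0)) (pow_pos hw 3), mul_pos (mul_pos (pow_pos hu 6) (pow_pos hv 1)) (pow_pos hw 2), mul_pos (mul_pos (pow_pos hu 6) (pow_pos hv 2)) (pow_pos hw 1), mul_pos (mul_pos (pow_pos hu 7) (pow_pos hv 0)) (pow_pos hw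 2), mul_pos (mul_pos (pow_pos hu 7) (pow_pos hv 1)) (pow_pos hw 1)]

theorem margin_shift_pos (a b : ℝ)
    (ha : a ∈ Set.Ioo (0:ℝ) 1) (hb : b ∈ Set.Ioo (0:ℝ) 1)
    (hsum : a + b > 1) :
    5*(D61 a b - D16 a b) + 4*(D62 a b - D26 a b)
      + 3*(D63 a b - D36 a b) + 2*(D64 a b - D46 a b) > 0 := by
  obtain ⟨ha0, ha1⟩ := ha
  obtain ⟨hb0, hb1⟩ := hb
  have hu : (0:ℝ) < 1 - a := by linarith
  have hv : (0:ℝ) < 1 - b := by linarith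
  have hw : (0:ℝ) < a + b - 1 := by linarith
  have key : 5*(D61 a b - D16 a b) + 4*(D62 a b - D26 a b)
      + 3*(D63 a b - D36 a b) + 2*(D64 a b - D46 a b)
      = 4*(1-b)*(a+b-1)^8 + 19*(1-b)^2*(a+b-1)^7 + 39*(1-b)^3*(a+b-1)^6 + 46*(1-b)^4*(a+b-1)^5 + 34*(1-b)^5*(a+b-1)^4 + 15*(1-b)^6*(a+b-1)^3 + 3*(1-b)^7*(a+b-1)^2 + 4*(1-a)*(a+b-1)^8 + 24*(1-a)*(1-b)*(a+b-1)^7 + 93*(1-a)*(1-b)^2*(a+b-1)^6 + 190*(1-a)*(1-b)^3*(a+b-1)^5 + 198*(1-a)*(1-b)^4*(a+b-1)^4 + 108*(1-a)*(1-b)^5*(a+b-1)^3 + 33*(1-a)*(1-b)^6*(a+b-1)^2 + 6*(1-a)*(1-b)^7*(a+b-1) + 19*(1-a)^2*(a+b-1)^7 + 93*(1-a)^2*(1-b)*(a+b-1)^6 + 210*(1-a)^2*(1-b)^2*(a+b-1)^5 + 322*(1-a)^2*(1-b)^3*(a+b-1)^4 + 303*(1-a)^2*(1-b)^4*(a+b-1)^3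 + 129*(1-a)^2*(1-b)^5*(a+b-1)^2 + 12*(1-a)^2*(1-b)^6*(a+b-1) + 39*(1-a)^3*(a+b-1)^6 + 190*(1-a)^3*(1-b)*(a+b-1)^5 + 322*(1-a)^3*(1-b)^2*(a+b-1)^4 + 264*(1-a)^3*(1-b)^3*(a+b-1)^3 + 155*(1-a)^3*(1-b)^4*(a+b-1)^2 + 62*(1-a)^3*(1-b)^5*(a+b-1) + 46*(1-a)^4*(a+b-1)^5 + 198*(1-a)^4*(1-b)*(a+b-1)^4 + 303*(1-a)^4*(1-b)^2*(a+b-1)^3 + 155*(1-a)^4*(1-b)^3*(a+b-1)^2 + 34*(1-a)^5*(a+b-1)^4 + 108*(1-a)^5*(1-b)*(a+b-1)^3 + 129*(1-a)^5*(1-b)^2*(a+b-1)^2 + 62*(1-a)^5*(1-b)^3*(a+b-1) + 15*(1-a)^6*(a+b-1)^3 + 33*(1-a)^6*(1-b)*(a+b-1)^2 + 12*(1-a)^6*(1-b)^2*(a+b-1) + 3*(1-a)^7*(a+b-1)^2 + 6*(1-a)^7*(1-b)*(a+b-1) := by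
    unfold D61 D16 D62 D26 D63 D36 D64 D46 SA61 SA16 SA62 SA26 SA63 SA36 SA64 SA46 S61 S62 S63 S64
    ring
  rw [key]
  exact margin_aux (1-a) (1-b) (a+b-1) hu hv hw
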